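/- Let n ≥ 1. In the complex Euclidean space with orthonormal standard basis {e_{(i,j)} : 0 ≤ i ≤ n, j = 0 or i < j ≤ n}, define for each 1 ≤ i ≤ n the vector v_i = (1/√n)(e_{(0,0)} + Σ_{j=i+1}^{n} e_{(i,j)} − Σ_{j=1}^{i−1} e_{(j,i)}). Then there exists a unitary operator U on this space such that U e_{(i,0)} = v_i for every 1 ≤ i ≤ n. -/

import Mathlib

/-- Valid basis indices: `(i,0)` for `0 ≤ i ≤ n` (this includes `(0,0)`), and
`(i,j)` for `1 ≤ i < j ≤ n`. -/
def ValidIdx (n : ℕ) (p : Fin (n + 1) × Fin (n + 1)) : Prop :=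
  p.2.val = 0 ∨ (1 ≤ p.1.val ∧ p.1.val < p.2.val)

instance (n : ℕ) : DecidablePred (ValidIdx n) := fun p => by
  unfold ValidIdx; infer_instance

/-- The index set of the orthonormal standard basis. -/
abbrev BIdx (n : ℕ) := {p : Fin (n + 1) × Fin (n + 1) // ValidIdx n p}

/-- The standard basis vector `e_{(a,b)}`. -/
noncomputable def e (n : ℕ) (a b : Fin (n + 1)) (h : ValidIdx n (a, b)) :
    EuclideanSpace ℂ (BIdx n) :=
  EuclideanSpace.single ⟨(a, b), h⟩ 1

/-- `v_i = (1/√n)(e_{(0,0)} + Σ_{j=i+1}^{n} e_{(i,j)} − Σ_{j=1}^{i−1} e_{(j,i)})`. -/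
noncomputable def v (n : ℕ) (i : Fin (n + 1)) (hi : 1 ≤ i.val) :
    EuclideanSpace ℂ (BIdx n) :=
  ((Real.sqrt n : ℂ))⁻¹ •
    (e n 0 0 (Or.inl rfl)
      + (∑ j : Fin (n + 1), if h : i.val < j.val then e n i j (Or.inr ⟨hi, h⟩) else 0)
      - (∑ j : Fin (n + 1), if h : 1 ≤ j.val ∧ j.val < i.val then e n j i (Or.inr h) else 0))

/-!
The vector `√n • v_i` has `n` entries, all equal to `±1`, so `‖v_i‖ = 1`. For `i < k` the
supports of `v_i` and `v_k` meet only in `(0,0)` and `(i,k)`, where the products of the entries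
are `1` and `-1`, so `v_i ⟂ v_k`. An orthonormal family indexed by part of an orthonormal basis
extends to an orthonormal basis, and the change of basis is the required unitary.
-/

open Finset

theorem OrthonormalBasis.exists_linearIsometryEquiv_apply_eq {𝕜 E ι κ : Type*} [RCLike 𝕜]
    [NormedAddCommGroup E] [InnerProductSpace 𝕜 E] [Fintype κ] [DecidableEq κ]
    (b : OrthonormalBasis κ 𝕜 E) {f : ι → κ} (hf : f.Injective) {w : ι → E}
    (hw : Orthonormal 𝕜 w) : ∃ U : E ≃ₗᵢ[𝕜] E, ∀ i, U (b (f i)) = w i := by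
  have := b.toBasis.finiteDimensional_of_finite
  have hw' : Orthonormal 𝕜 ((Set.range f).domRestrict (Function.extend f w 0)) := by
    convert hw.comp _ (Equiv.ofInjective f hf).symm.injective
    ext1 ⟨_, i, rfl⟩
    simp [hf.extend_apply]
  obtain ⟨b', hb'⟩ := hw'.exists_orthonormalBasis_extension_of_card_eq
    (Module.finrank_eq_card_basis b.toBasis)
  refine ⟨b.repr.trans b'.repr.symm, fun i => ?_⟩
  simp [hb' (f i) ⟨i, rfl⟩, hf.extend_apply]

noncomputable def u (n : ℕ) (i : Fin (n + 1)) (hi : 1 ≤ i.val) : EuclideanSpace ℂ (BIdx n) :=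
  e n 0 0 (Or.inl rfl)
    + (∑ j : Fin (n + 1), if h : i.val < j.val then e n i j (Or.inr ⟨hi, h⟩) else 0)
    - (∑ j : Fin (n + 1), if h : 1 ≤ j.val ∧ j.val < i.val then e n j i (Or.inr h) else 0)

lemma v_eq_smul_u (n : ℕ) (i : Fin (n + 1)) (hi : 1 ≤ i.val) :
    v n i hi = (Real.sqrt n : ℂ)⁻¹ • u n i hi := rfl

lemma u_apply {n : ℕ} (k : Fin (n + 1)) (hk : 1 ≤ k.val) (p : BIdx n) :
    u n k hk p = (if p.1 = (0, 0) then 1 else 0)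
      + (if k < p.1.2 ∧ p.1.1 = k then 1 else 0)
      - (if 1 ≤ p.1.1.val ∧ p.1.1 < k ∧ p.1.2 = k then 1 else 0) := by
  simp only [u, e, PiLp.add_apply, PiLp.sub_apply, WithLp.ofLp_sum, Finset.sum_apply,
    apply_dite (fun y : EuclideanSpace ℂ (BIdx n) => y p), PiLp.single_apply,
    Subtype.ext_iff, Prod.ext_iff]
  rw [sum_eq_single p.1.2 (by intro x _ hx; simp [Ne.symm hx]) (by simp),
    sum_eq_single p.1.1 (by intro x _ hx; simp [Ne.symm hx]) (by simp)]
  simp [ite_and]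

lemma inner_u_left {n : ℕ} (i : Fin (n + 1)) (hi : 1 ≤ i.val)
    (x : EuclideanSpace ℂ (BIdx n)) :
    inner ℂ (u n i hi) x = x ⟨(0, 0), Or.inl rfl⟩
      + (∑ j : Fin (n + 1), if h : i.val < j.val then x ⟨(i, j), Or.inr ⟨hi, h⟩⟩ else 0)
      - (∑ j : Fin (n + 1),
          if h : 1 ≤ j.val ∧ j.val < i.val then x ⟨(j, i), Or.inr h⟩ else 0) := by
  simp [u, e, EuclideanSpace.inner_single_left, apply_dite (inner ℂ · x)]

lemma card_filter_lt {n : ℕ} (i : Fin (n + 1)) : #{j | i < j} = n - i.val := by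
  simp [filter_lt_eq_Ioi]

lemma card_filter_pos_lt {n : ℕ} (i : Fin (n + 1)) :
    #{j : Fin (n + 1) | 1 ≤ j.val ∧ j < i} = i.val - 1 := by
  have : ({j : Fin (n + 1) | 1 ≤ j.val ∧ j < i} : Finset _) = Ioo 0 i := by
    ext j
    simp only [mem_filter, mem_univ, true_and, mem_Ioo, Fin.lt_def, Fin.val_zero]
    omega
  rw [this, Fin.card_Ioo, Fin.val_zero, Nat.sub_zero]

lemma inner_u_u {n : ℕ} (i k : Fin (n + 1)) (hi : 1 ≤ i.val) (hk : 1 ≤ k.val) :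
    inner ℂ (u n i hi) (u n k hk) = if i = k then (n : ℂ) else 0 := by
  have hi0 : i ≠ 0 := by rintro rfl; simp at hi
  rw [inner_u_left]
  simp only [u_apply]
  rcases eq_or_ne i k with rfl | hik
  · simp +contextual [hi0, sum_boole, sum_ite, card_filter_lt, card_filter_pos_lt]
    have := i.is_lt
    norm_cast
    omega
  · simp [hik, hi0]
    rw [sum_eq_single k (by intro x _ hx; simp [hx]) (by simp),
      sum_eq_single k (by intro x _ hx; simp [hx]) (by simp)]
    rcases lt_or_gt_of_ne hik with h | h <;> simp [h, h.not_gt, hi, hk]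

lemma inner_v_v {n : ℕ} (i k : Fin (n + 1)) (hi : 1 ≤ i.val) (hk : 1 ≤ k.val) :
    inner ℂ (v n i hi) (v n k hk) = if i = k then 1 else 0 := by
  have hn : (n : ℝ) ≠ 0 := by have := i.is_lt; norm_cast; omega
  have hsqrt : (Real.sqrt n : ℂ)⁻¹ * (Real.sqrt n : ℂ)⁻¹ * n = 1 := by
    rw [← mul_inv, ← Complex.ofReal_mul, Real.mul_self_sqrt n.cast_nonneg]
    exact_mod_cast inv_mul_cancel₀ hn
  rw [v_eq_smul_u, v_eq_smul_u, inner_smul_left, inner_smul_right, inner_u_u, Complex.conj_inv,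
    Complex.conj_ofReal]
  split_ifs <;> simp [← mul_assoc, hsqrt]

lemma orthonormal_v (n : ℕ) :
    Orthonormal ℂ (fun i : {i : Fin (n + 1) // 1 ≤ i.val} => v n i i.2) := by
  rw [orthonormal_iff_ite]
  rintro ⟨i, hi⟩ ⟨k, hk⟩
  simp [inner_v_v]

theorem stmt8_general (n : ℕ) :
    ∃ U : EuclideanSpace ℂ (BIdx n) ≃ₗᵢ[ℂ] EuclideanSpace ℂ (BIdx n),
      ∀ (i : Fin (n + 1)) (hi : 1 ≤ i.val),
        U (e n i 0 (Or.inl rfl)) = v n i hi := by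
  have hf : Function.Injective fun i : {i : Fin (n + 1) // 1 ≤ i.val} =>
      (⟨(i.1, 0), Or.inl rfl⟩ : BIdx n) :=
    fun _ _ h => Subtype.ext (congrArg (fun p : BIdx n => p.1.1) h)
  obtain ⟨U, hU⟩ :=
    (EuclideanSpace.basisFun (BIdx n) ℂ).exists_linearIsometryEquiv_apply_eq hf (orthonormal_v n)
  exact ⟨U, fun i hi => by simpa [e] using hU ⟨i, hi⟩⟩

theorem stmt8 (n : ℕ) (hn : 1 ≤ n) :
    ∃ U : EuclideanSpace ℂ (BIdx n) ≃ₗᵢ[ℂ] EuclideanSpace ℂ (BIdx n),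
      ∀ (i : Fin (n + 1)) (hi : 1 ≤ i.val),
        U (e n i 0 (Or.inl rfl)) = v n i hi :=
  stmt8_general n
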